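/- Let a > 0 and b > 0, and let z ∈ ℂ with Re z ≤ 0. Then ∫_0^∞ (e^{s z} − 1) · a s^{−1} e^{−b s} ds = −a Log(1 − z/b), where Log is the principal branch of the complex logarithm (well defined since Re(1 − z/b) ≥ 1), and the integrand is absolutely integrable on (0,∞). -/

import Mathlib

/-!
Since `e^{sz} e^{-bs} = e^{-(b-z)s}`, the integral is `a` times Frullani's integral
`∫₀^∞ (e^{-cs} - e^{-bs}) s⁻¹ ds` with `c = b - z`. Writing
`e^{-cs} - e^{-bs} = s ∫₀¹ (b - c) e^{-(c + t(b-c))s} dt` and swapping the integrals, the inner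
integral is `(b - c) / (c + t(b-c))`, the derivative of `t ↦ log (c + t(b-c))`; the segment from
`c` to `b` stays in the right half-plane, where `log` is holomorphic, so Frullani's integral is
`log b - log c`. Finally `log (b - z) = log b + log (1 - z/b)` because `b > 0`.
-/

open MeasureTheory Complex Set

noncomputable section

section Frullani

variable {b c : ℂ}

lemma min_re_le_re_add_mul_sub {t : ℝ} (ht : t ∈ Icc (0 : ℝ) 1) :
    min b.re c.re ≤ (c + t * (b - c)).re := by
  have hre : (c + t * (b - c)).re = (1 - t) * c.re + t * b.re := by simp; ring
  rw [hre]
  nlinarith [ht.1, ht.2, min_le_left b.re c.re, min_le_right b.re c.re]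

lemma cexp_neg_sub_cexp_neg_div_eq_integral {s : ℝ} (hs : s ≠ 0) :
    (cexp (-c * s) - cexp (-b * s)) / s =
      ∫ t in Ioc (0 : ℝ) 1, (b - c) * cexp (-(c + t * (b - c)) * s) := by
  have hderiv : ∀ t : ℝ, HasDerivAt (fun t : ℝ => -cexp (-(c + t * (b - c)) * s) / s)
      ((b - c) * cexp (-(c + t * (b - c)) * s)) t := by
    intro t
    have hlin : HasDerivAt (fun t : ℝ => -(c + t * (b - c)) * s) (-(b - c) * s) t := by
      simpa using
        (((hasDerivAt_id t).ofReal_comp.mul_const (b - c)).const_add c).neg.mul_const (s : ℂ)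
    refine (hlin.cexp.neg.div_const (s : ℂ)).congr_deriv ?_
    field_simp [show (s : ℂ) ≠ 0 by exact_mod_cast hs]
  rw [← intervalIntegral.integral_of_le zero_le_one,
    intervalIntegral.integral_eq_sub_of_hasDerivAt (fun t _ => hderiv t)
    (by apply Continuous.intervalIntegrable; fun_prop)]
  simp only [ofReal_one, ofReal_zero, one_mul, zero_mul, add_zero, add_sub_cancel]
  ring

lemma integral_cexp_neg_mul_Ioi {w : ℂ} (hw : 0 < w.re) :
    ∫ s in Ioi (0 : ℝ), cexp (-w * s) = w⁻¹ := by
  rw [integral_exp_mul_complex_Ioi (by simpa using hw)]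
  simp

lemma integral_sub_div_add_mul_sub (hb : 0 < b.re) (hc : 0 < c.re) :
    ∫ t in (0 : ℝ)..1, (b - c) / (c + t * (b - c)) = log b - log c := by
  have hpos : ∀ t ∈ uIcc (0 : ℝ) 1, 0 < (c + t * (b - c)).re := fun t ht =>
    (lt_min hb hc).trans_le (min_re_le_re_add_mul_sub (by rwa [uIcc_of_le zero_le_one] at ht))
  have hderiv : ∀ t ∈ uIcc (0 : ℝ) 1,
      HasDerivAt (fun t : ℝ => log (c + t * (b - c))) ((b - c) / (c + t * (b - c))) t := by
    intro t ht
    have hlin : HasDerivAt (fun t : ℝ => c + t * (b - c)) (b - c) t := by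
      simpa using ((hasDerivAt_id t).ofReal_comp.mul_const (b - c)).const_add c
    exact hlin.clog_real (mem_slitPlane_iff.2 (Or.inl (hpos t ht)))
  rw [intervalIntegral.integral_eq_sub_of_hasDerivAt hderiv]
  · simp
  · refine ContinuousOn.intervalIntegrable (continuousOn_const.div (by fun_prop) ?_)
    exact fun t ht h => (hpos t ht).ne' (by rw [h]; simp)

lemma integrable_cexp_neg_add_mul_sub_prod (hb : 0 < b.re) (hc : 0 < c.re) :
    Integrable (Function.uncurry fun (s t : ℝ) => (b - c) * cexp (-(c + t * (b - c)) * s))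
      ((volume.restrict (Ioi 0)).prod (volume.restrict (Ioc 0 1))) := by
  have hbound : Integrable (fun p : ℝ × ℝ => ‖b - c‖ * Real.exp (-min b.re c.re * p.1))
      ((volume.restrict (Ioi 0)).prod (volume.restrict (Ioc 0 1))) := by
    simpa using ((exp_neg_integrableOn_Ioi 0 (lt_min hb hc)).const_mul ‖b - c‖).mul_prod
      (integrable_const (1 : ℝ) : Integrable _ (volume.restrict (Ioc (0 : ℝ) 1)))
  refine hbound.mono' (by apply Continuous.aestronglyMeasurable; fun_prop) ?_
  rw [Measure.prod_restrict]
  filter_upwards [ae_restrict_mem (measurableSet_Ioi.prod measurableSet_Ioc)]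
    with ⟨s, t⟩ ⟨hs, ht⟩
  have hre := min_re_le_re_add_mul_sub (b := b) (c := c) (Ioc_subset_Icc_self ht)
  simp only [Function.uncurry_apply_pair, norm_mul, norm_exp]
  gcongr
  simp only [neg_mul, neg_re, mul_re, ofReal_re, ofReal_im, mul_zero, sub_zero]
  nlinarith [mem_Ioi.1 hs]

lemma integrableOn_cexp_neg_sub_cexp_neg_div (hb : 0 < b.re) (hc : 0 < c.re) :
    IntegrableOn (fun s : ℝ => (cexp (-c * s) - cexp (-b * s)) / s) (Ioi 0) :=
  IntegrableOn.congr_fun (integrable_cexp_neg_add_mul_sub_prod hb hc).integral_prod_left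
    (fun _ hs => (cexp_neg_sub_cexp_neg_div_eq_integral (ne_of_gt hs)).symm) measurableSet_Ioi

theorem integral_cexp_neg_sub_cexp_neg_div (hb : 0 < b.re) (hc : 0 < c.re) :
    ∫ s in Ioi (0 : ℝ), (cexp (-c * s) - cexp (-b * s)) / s = log b - log c :=
  calc ∫ s in Ioi (0 : ℝ), (cexp (-c * s) - cexp (-b * s)) / s
      = ∫ s in Ioi (0 : ℝ), ∫ t in Ioc (0 : ℝ) 1, (b - c) * cexp (-(c + t * (b - c)) * s) :=
        setIntegral_congr_fun measurableSet_Ioi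
          fun _ hs => cexp_neg_sub_cexp_neg_div_eq_integral (ne_of_gt hs)
    _ = ∫ t in Ioc (0 : ℝ) 1, ∫ s in Ioi (0 : ℝ), (b - c) * cexp (-(c + t * (b - c)) * s) :=
        integral_integral_swap (integrable_cexp_neg_add_mul_sub_prod hb hc)
    _ = ∫ t in Ioc (0 : ℝ) 1, (b - c) / (c + t * (b - c)) := by
        refine setIntegral_congr_fun measurableSet_Ioc fun t ht => ?_
        have hpos := (lt_min hb hc).trans_le (min_re_le_re_add_mul_sub (Ioc_subset_Icc_self ht))
        rw [integral_const_mul, integral_cexp_neg_mul_Ioi hpos, div_eq_mul_inv]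
    _ = log b - log c := by
        rw [← intervalIntegral.integral_of_le zero_le_one, integral_sub_div_add_mul_sub hb hc]

end Frullani

theorem stmt12 (a b : ℝ) (hb : 0 < b) (z : ℂ) (hz : z.re ≤ 0) :
    IntegrableOn (fun s : ℝ =>
        (Complex.exp ((s : ℂ) * z) - 1) * ((a * s⁻¹ * Real.exp (-(b * s)) : ℝ) : ℂ))
      (Set.Ioi 0) ∧
    ∫ s in Set.Ioi (0 : ℝ),
        (Complex.exp ((s : ℂ) * z) - 1) * ((a * s⁻¹ * Real.exp (-(b * s)) : ℝ) : ℂ) =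
      -(a : ℂ) * Complex.log (1 - z / (b : ℂ)) := by
  have hb_re : 0 < (b : ℂ).re := by simpa using hb
  have hbz_re : 0 < ((b : ℂ) - z).re := by simp; linarith
  have hintegrand : (fun s : ℝ =>
      (Complex.exp ((s : ℂ) * z) - 1) * ((a * s⁻¹ * Real.exp (-(b * s)) : ℝ) : ℂ)) =
      fun s : ℝ => a * ((cexp (-(b - z) * s) - cexp (-b * s)) / s) := by
    ext s
    have hexp : cexp (-(b - z) * s) = cexp (s * z) * cexp (-(b * s)) := by
      rw [← Complex.exp_add]
      congr 1
      ring
    push_cast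
    rw [hexp, neg_mul]
    ring
  have hlog : log ((b : ℂ) - z) = Real.log b + log (1 - z / b) := by
    have hne : 1 - z / (b : ℂ) ≠ 0 := fun h => by
      have := congrArg re h
      simp [div_ofReal_re] at this
      nlinarith [div_nonpos_of_nonpos_of_nonneg hz hb.le]
    rw [← log_ofReal_mul hb hne]
    congr 1
    rw [mul_sub, mul_one, mul_div_cancel₀ _ (ofReal_ne_zero.2 hb.ne')]
  rw [hintegrand]
  refine ⟨(integrableOn_cexp_neg_sub_cexp_neg_div hb_re hbz_re).const_mul _, ?_⟩
  rw [integral_const_mul, integral_cexp_neg_sub_cexp_neg_div hb_re hbz_re, hlog, ofReal_log hb.le]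
  ring
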